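/- arXiv:2510.27185 — 2 statements merged into one kernel-verified Lean document; each statement's English description precedes it below -/
import Mathlib

section
/- Let a ∈ ℂ and I > 0 be a real number. Then Real.log(1 + |a|²/I) equals the supremum over t ∈ ℂ and real κ > 0 of the expression Real.log κ − κ·(|t|²·(|a|² + I) − 2·Re(conj(t)·a) + 1) + 1, and this supremum is attained at t = a/(|a|² + I) and κ = (|a|² + I)/I. -/
/-- Scalar essence of Lemma 1: `log(1 + |a|²/I)` is the supremum over `t : ℂ` and `κ > 0` of
`log κ − κ·(|t|²·(|a|² + I) − 2·Re(conj t·a) + 1) + 1`, attained at `t = a/(|a|²+I)` and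
`κ = (|a|²+I)/I`. -/
theorem stmt_4 (a : ℂ) (I : ℝ) (hI : 0 < I) :
    IsGreatest
      {x : ℝ | ∃ t : ℂ, ∃ κ : ℝ, 0 < κ ∧
        x = Real.log κ -
          κ * (‖t‖ ^ 2 * (‖a‖ ^ 2 + I) - 2 * ((starRingEnd ℂ) t * a).re + 1)
          + 1}
      (Real.log (1 + ‖a‖ ^ 2 / I)) ∧
    Real.log ((‖a‖ ^ 2 + I) / I) -
        ((‖a‖ ^ 2 + I) / I) *
          (‖a / ((‖a‖ ^ 2 + I : ℝ) : ℂ)‖ ^ 2 * (‖a‖ ^ 2 + I)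
            - 2 * ((starRingEnd ℂ) (a / ((‖a‖ ^ 2 + I : ℝ) : ℂ)) * a).re + 1) + 1
      = Real.log (1 + ‖a‖ ^ 2 / I) := by
  have hA : (0:ℝ) ≤ ‖a‖ ^ 2 := by positivity
  set S : ℝ := ‖a‖ ^ 2 + I with hSdef
  have hS0 : 0 < S := by positivity
  have hSI : S / I = 1 + ‖a‖ ^ 2 / I := by
    field_simp [hSdef]
    ring
  -- key computations at optimum
  have habs : ‖a / (S:ℂ)‖ ^ 2 = ‖a‖ ^ 2 / S ^ 2 := by
    rw [norm_div, Complex.norm_real, Real.norm_of_nonneg hS0.le, div_pow]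
  have hre : ((starRingEnd ℂ) (a / (S:ℂ)) * a).re = ‖a‖ ^ 2 / S := by
    have : (starRingEnd ℂ) (a / (S:ℂ)) * a = ((‖a‖ ^ 2 / S : ℝ) : ℂ) := by
      rw [map_div₀, Complex.conj_ofReal, div_mul_eq_mul_div, Complex.conj_mul']
      push_cast
      rfl
    rw [this, Complex.ofReal_re]
  have heq : Real.log (S / I) -
        (S / I) *
          (‖a / (S : ℂ)‖ ^ 2 * S
            - 2 * ((starRingEnd ℂ) (a / (S : ℂ)) * a).re + 1) + 1
      = Real.log (1 + ‖a‖ ^ 2 / I) := by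
    rw [habs, hre, hSI]
    have : ‖a‖ ^ 2 / S ^ 2 * S - 2 * (‖a‖ ^ 2 / S) + 1 = I / S := by
      field_simp [hSdef]
      ring
    rw [this]
    have : (1 + ‖a‖ ^ 2 / I) * (I / S) = 1 := by
      rw [← hSI]
      field_simp
    rw [this]
    ring
  constructor
  · constructor
    · exact ⟨a / (S:ℂ), S / I, by positivity, by rw [heq]⟩
    · rintro x ⟨t, κ, hκ, rfl⟩
      set E : ℝ := ‖t‖ ^ 2 * S - 2 * ((starRingEnd ℂ) t * a).re + 1 with hE
      have hElb : I / S ≤ E := by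
        rw [div_le_iff₀ hS0, hE]
        have h1 : ‖t‖ ^ 2 = t.re ^ 2 + t.im ^ 2 := by
          rw [Complex.sq_norm, Complex.normSq_apply]; ring
        have h2 : ((starRingEnd ℂ) t * a).re = t.re * a.re + t.im * a.im := by
          simp [Complex.mul_re]
        have h3 : ‖a‖ ^ 2 = a.re ^ 2 + a.im ^ 2 := by
          rw [Complex.sq_norm, Complex.normSq_apply]; ring
        rw [h1, h2]
        nlinarith [sq_nonneg (S * t.re - a.re), sq_nonneg (S * t.im - a.im), hS0, hI,
          h3, hSdef]
      have hstep : Real.log κ - κ * E + 1 ≤ Real.log κ - κ * (I / S) + 1 := by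
        have := mul_le_mul_of_nonneg_left hElb (le_of_lt hκ)
        linarith
      have hc : (0:ℝ) < I / S := by positivity
      have hlog : Real.log (κ * (I / S)) ≤ κ * (I / S) - 1 :=
        Real.log_le_sub_one_of_pos (by positivity)
      rw [Real.log_mul (ne_of_gt hκ) (ne_of_gt hc)] at hlog
      have hinv : Real.log (I / S) = - Real.log (S / I) := by
        rw [← Real.log_inv]
        congr 1
        rw [inv_div]
      rw [← hSI]
      rw [hinv] at hlog
      linarith
  · exact heq
end

section
/- Let λ > λ_g > 0 and x_u, y ∈ ℝ. Define θ : ℝ → ℝ by θ(x) = (2π/λ)·√((x_u − x)² + y²) + (2π/λ_g)·x, and set L = λ·λ_g/(λ − λ_g). Then for every x₀ ∈ ℝ and every target phase φ ∈ ℝ, there exist x ∈ [x₀, x₀ + L] and k ∈ ℤ such that θ(x) = φ + 2π·k. -/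
/-- Full phase sweep by small movement: with `lam > lamg > 0` and
`θ(x) = (2π/lam)·√((x_u − x)² + y²) + (2π/lamg)·x`, every target phase `φ` is achieved
modulo `2π` by some `x` in any interval `[x₀, x₀ + L]` of length
`L = lam·lamg/(lam − lamg)`. -/
theorem stmt_11 (lam lamg : ℝ) (hg : 0 < lamg) (hlt : lamg < lam) (xu y : ℝ)
    (L : ℝ) (hL : L = lam * lamg / (lam - lamg)) (x₀ φ : ℝ) :
    ∃ x ∈ Set.Icc x₀ (x₀ + L), ∃ k : ℤ,
      (2 * Real.pi / lam) * Real.sqrt ((xu - x) ^ 2 + y ^ 2) + (2 * Real.pi / lamg) * x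
        = φ + 2 * Real.pi * (k : ℝ) := by
  have hpi := Real.pi_pos
  have hlam : 0 < lam := hg.trans hlt
  have hd : 0 < lam - lamg := sub_pos.mpr hlt
  have hLpos : 0 < L := by
    rw [hL]; exact div_pos (by positivity) hd
  set θ : ℝ → ℝ := fun x =>
    (2 * Real.pi / lam) * Real.sqrt ((xu - x) ^ 2 + y ^ 2) + (2 * Real.pi / lamg) * x with hθ
  have hcont : ContinuousOn θ (Set.Icc x₀ (x₀ + L)) := by
    apply Continuous.continuousOn
    fun_prop
  -- Lipschitz bound on the sqrt term
  set s₁ : ℝ := Real.sqrt ((xu - x₀) ^ 2 + y ^ 2) with hs₁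
  set s₂ : ℝ := Real.sqrt ((xu - (x₀ + L)) ^ 2 + y ^ 2) with hs₂
  have hs₂0 : 0 ≤ s₂ := Real.sqrt_nonneg _
  have hs₂sq : s₂ ^ 2 = (xu - (x₀ + L)) ^ 2 + y ^ 2 := Real.sq_sqrt (by positivity)
  have hs₂abs : |xu - (x₀ + L)| ≤ s₂ := by
    rw [← Real.sqrt_sq_eq_abs]
    exact Real.sqrt_le_sqrt (by nlinarith [sq_nonneg y])
  have key : s₁ ≤ s₂ + L := by
    rw [hs₁]
    rw [show s₂ + L = Real.sqrt ((s₂ + L) ^ 2) from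
      (Real.sqrt_sq (by linarith)).symm]
    apply Real.sqrt_le_sqrt
    have := abs_le.mp hs₂abs
    nlinarith [this.1, this.2]
  -- θ increases by at least 2π over the interval
  have hΔ : θ x₀ + 2 * Real.pi ≤ θ (x₀ + L) := by
    simp only [hθ, ← hs₁, ← hs₂]
    have h1 : (2 * Real.pi / lam) * s₁ ≤ (2 * Real.pi / lam) * (s₂ + L) := by
      apply mul_le_mul_of_nonneg_left key; positivity
    have h2 : (2 * Real.pi / lam) * L + 2 * Real.pi ≤ (2 * Real.pi / lamg) * L := by
      rw [hL]
      rw [div_mul_div_comm, div_mul_div_comm]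
      have hml : 0 < lam * (lam - lamg) := by positivity
      have hmg : 0 < lamg * (lam - lamg) := by positivity
      rw [div_add' _ _ _ (by positivity), div_le_div_iff₀ (by positivity) (by positivity)]
      ring_nf
      nlinarith [sq_nonneg (lam - lamg), mul_pos hg (sub_pos.mpr hlt)]
    nlinarith
  -- choose k
  set k : ℤ := ⌈(θ x₀ - φ) / (2 * Real.pi)⌉ with hk
  have hk1 : (θ x₀ - φ) / (2 * Real.pi) ≤ (k : ℝ) := Int.le_ceil _
  have hk2 : (k : ℝ) < (θ x₀ - φ) / (2 * Real.pi) + 1 := Int.ceil_lt_add_one _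
  have htwopi : (0:ℝ) < 2 * Real.pi := by positivity
  have ht1 : θ x₀ ≤ φ + 2 * Real.pi * (k : ℝ) := by
    have := (div_le_iff₀ htwopi).mp hk1
    linarith
  have ht2 : φ + 2 * Real.pi * (k : ℝ) ≤ θ (x₀ + L) := by
    have := (lt_div_iff₀ htwopi).mp (by linarith : (k:ℝ) - 1 < (θ x₀ - φ) / (2 * Real.pi))
    nlinarith
  have hmem : φ + 2 * Real.pi * (k : ℝ) ∈ Set.Icc (θ x₀) (θ (x₀ + L)) := ⟨ht1, ht2⟩
  have hsub := intermediate_value_Icc (by linarith : x₀ ≤ x₀ + L) hcont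
  obtain ⟨x, hx, hxval⟩ := hsub hmem
  exact ⟨x, hx, k, hxval⟩
end
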